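/- Let u be a real q-convex function on an open set ω ⊆ ℝⁿ and let φ : ℝ → ℝ be strictly increasing and strictly convex, extended to [−∞,+∞) by φ(−∞) := lim_{t→−∞} φ(t) ∈ [−∞,+∞). Then φ ∘ u is real q-convex on ω. -/

import Mathlib

open Metric Set Filter

noncomputable section

/-- An upper semicontinuous function `u : ω → [−∞,+∞)` (EReal-valued, never `⊤` on `ω`)
is *real q-convex* on `ω` if it satisfies the local maximum property with respect to
affine linear functions on real `(q+1)`-dimensional affine subspaces. -/
def RealQConvexOn {E : Type*} [NormedAddCommGroup E] [NormedSpace ℝ E]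
    (q : ℕ) (u : E → EReal) (ω : Set E) : Prop :=
  (∀ x ∈ ω, u x ≠ ⊤) ∧ UpperSemicontinuousOn u ω ∧
    ∀ P : AffineSubspace ℝ E, Module.finrank ℝ P.direction = q + 1 →
      ∀ (c : E) (r : ℝ), 0 < r → closure (Metric.ball c r) ⊆ ω →
        ∀ l : E →ᵃ[ℝ] ℝ,
          (∀ x ∈ Metric.sphere c r ∩ (P : Set E), u x ≤ (l x : EReal)) →
          ∀ x ∈ Metric.closedBall c r ∩ (P : Set E), u x ≤ (l x : EReal)

open Classical in
/-- Extension of `φ : ℝ → ℝ` to `[−∞,+∞)` by `φ(−∞) := lim_{t→−∞} φ(t)`. -/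
def erealExt (φ : ℝ → ℝ) : EReal → EReal := fun t =>
  if t = ⊥ then ⨅ s : ℝ, (φ s : EReal)
  else if t = ⊤ then ⊤
  else ((φ t.toReal : ℝ) : EReal)

/-!
Upper semicontinuity survives composition with `erealExt φ`, which is monotone and continuous
on `[−∞, +∞)`. For the maximum property at a point `x` with `u x = t` finite, let
`s ↦ φ t + a (s − t)`, `a > 0`, be a supporting line of `φ` at `t`. Inverting it turns
`φ ∘ u ≤ l` on the sphere into `u ≤ t + (l − φ t) / a` there; the latter bound is affine, so
it holds at `x` by q-convexity of `u`, which says exactly `φ t ≤ l x`. Where `u x = −∞`, the value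
`inf φ` is below `φ ∘ u` everywhere, and an affine function on a ball of a positive-dimensional
affine subspace attains its minimum on the boundary sphere.
-/

theorem ConvexOn.exists_supporting_line_of_strictMono {φ : ℝ → ℝ} (hφc : ConvexOn ℝ univ φ)
    (hφm : StrictMono φ) (t : ℝ) : ∃ a > 0, ∀ s, φ t + a * (s - t) ≤ φ s := by
  have ht : t ∈ interior (univ : Set ℝ) := by simp
  refine ⟨derivWithin φ (Iio t) t, ?_, fun s => ?_⟩
  · calc 0 < slope φ (t - 1) t := by
          rw [slope_def_field]; exact div_pos (sub_pos.2 (hφm (by linarith))) (by linarith)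
      _ ≤ _ := hφc.slope_le_leftDeriv_of_mem_interior trivial ht (by linarith)
  rcases lt_trichotomy s t with hst | rfl | hts
  · have := hφc.slope_le_leftDeriv_of_mem_interior trivial ht hst
    rw [slope_def_field, div_le_iff₀ (by linarith)] at this
    linarith
  · simp
  · have := (hφc.leftDeriv_le_rightDeriv_of_mem_interior ht).trans
      (hφc.rightDeriv_le_slope_of_mem_interior ht trivial hts)
    rw [slope_def_field, le_div_iff₀ (by linarith)] at this
    linarith

section erealExt

variable (φ : ℝ → ℝ)

@[simp]
theorem erealExt_bot : erealExt φ ⊥ = ⨅ s : ℝ, (φ s : EReal) := by simp [erealExt]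

@[simp]
theorem erealExt_top : erealExt φ ⊤ = ⊤ := by simp [erealExt]

@[simp]
theorem erealExt_coe (t : ℝ) : erealExt φ t = φ t := by simp [erealExt]

theorem erealExt_ne_top {w : EReal} (hw : w ≠ ⊤) : erealExt φ w ≠ ⊤ := by
  induction w using EReal.rec with
  | bot => exact ne_top_of_le_ne_top (EReal.coe_ne_top (φ 0)) (by simpa using iInf_le _ 0)
  | coe t => simp
  | top => exact absurd rfl hw

theorem erealExt_bot_le (w : EReal) : erealExt φ ⊥ ≤ erealExt φ w := by
  induction w using EReal.rec with
  | bot => rfl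
  | coe t => simpa using iInf_le _ t
  | top => simp

variable {φ}

theorem Monotone.erealExt (hφ : Monotone φ) : Monotone (erealExt φ) := by
  intro v w hvw
  induction v using EReal.rec with
  | bot => exact erealExt_bot_le φ w
  | top => simp [top_le_iff.1 hvw]
  | coe s =>
    induction w using EReal.rec with
    | bot => exact absurd hvw (by simp)
    | coe t => simpa using hφ (EReal.coe_le_coe_iff.1 hvw)
    | top => simp

theorem continuousAt_erealExt (hφc : Continuous φ) (hφm : Monotone φ) {w : EReal} (hw : w ≠ ⊤) :
    ContinuousAt (erealExt φ) w := by
  induction w using EReal.rec with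
  | bot =>
    refine tendsto_order.2 ⟨fun a ha => Eventually.of_forall fun w => ha.trans_le
      (erealExt_bot_le φ w), fun b hb => ?_⟩
    obtain ⟨s, hs⟩ := iInf_lt_iff.1 (by simpa using hb)
    filter_upwards [Iio_mem_nhds (EReal.bot_lt_coe s)] with w hw
    exact (hφm.erealExt hw.le).trans_lt (by simpa using hs)
  | coe t =>
    rw [← EReal.isOpenEmbedding_coe.continuousAt_iff]
    have : erealExt φ ∘ ((↑) : ℝ → EReal) = fun s => (φ s : EReal) := funext (erealExt_coe φ)
    exact this ▸ (EReal.continuous_coe_iff.2 hφc).continuousAt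
  | top => exact absurd rfl hw

theorem UpperSemicontinuousOn.erealExt {E : Type*} [TopologicalSpace E] {u : E → EReal}
    {ω : Set E} (hu : UpperSemicontinuousOn u ω) (hne : ∀ x ∈ ω, u x ≠ ⊤) (hφc : Continuous φ)
    (hφm : Monotone φ) : UpperSemicontinuousOn (fun x => _root_.erealExt φ (u x)) ω := fun x hx =>
  (continuousAt_erealExt hφc hφm (hne x hx)).comp_upperSemicontinuousWithinAt (hu x hx)
    hφm.erealExt

end erealExt

theorem le_coe_of_erealExt_le_coe {φ : ℝ → ℝ} {a t : ℝ} (ha : 0 < a)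
    (hφ : ∀ s, φ t + a * (s - t) ≤ φ s) {w : EReal} {y : ℝ} (h : erealExt φ w ≤ y) :
    w ≤ ((t + (y - φ t) / a : ℝ) : EReal) := by
  induction w using EReal.rec with
  | bot => exact bot_le
  | top => simp at h
  | coe s =>
    have hs : φ s ≤ y := by simpa using h
    have : s - t ≤ (y - φ t) / a := by rw [le_div_iff₀ ha]; linarith [hφ s]
    exact EReal.coe_le_coe_iff.2 (by linarith)

section Geometry

variable {E : Type*} [NormedAddCommGroup E] [NormedSpace ℝ E]

theorem exists_nonneg_add_smul_mem_sphere {c x v : E} {r : ℝ} (hv : v ≠ 0)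
    (hx : x ∈ closedBall c r) : ∃ t ≥ (0 : ℝ), x + t • v ∈ sphere c r := by
  have hcont : Continuous fun t : ℝ => dist (x + t • v) c := by fun_prop
  have hlower : ∀ t : ℝ, t * ‖v‖ - dist x c ≤ dist (x + t • v) c := fun t => by
    have h := dist_triangle (x + t • v) c x
    rw [dist_comm c x, dist_self_add_left, norm_smul, Real.norm_eq_abs] at h
    nlinarith [le_abs_self t, norm_nonneg v]
  have htop : Tendsto (fun t : ℝ => dist (x + t • v) c) atTop atTop :=
    tendsto_atTop_mono hlower <| tendsto_atTop_add_const_right _ _ <|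
      tendsto_id.atTop_mul_const (norm_pos_iff.2 hv)
  obtain ⟨t, ht, hrt⟩ := intermediate_value_Ici hcont.continuousOn htop
    (show dist (x + (0 : ℝ) • v) c ≤ r by simpa using hx)
  exact ⟨t, ht, hrt⟩

theorem AffineSubspace.exists_mem_sphere_inter_le {P : AffineSubspace ℝ E} (hP : P.direction ≠ ⊥)
    (l : E →ᵃ[ℝ] ℝ) {c x : E} {r : ℝ} (hx : x ∈ closedBall c r ∩ P) :
    ∃ y ∈ sphere c r ∩ P, l y ≤ l x := by
  obtain ⟨v, hvP, hv0, hlv⟩ : ∃ v ∈ P.direction, v ≠ 0 ∧ l.linear v ≤ 0 := by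
    obtain ⟨v, hvP, hv0⟩ := Submodule.exists_mem_ne_zero_of_ne_bot hP
    rcases le_total (l.linear v) 0 with h | h
    · exact ⟨v, hvP, hv0, h⟩
    · exact ⟨-v, neg_mem hvP, neg_ne_zero.2 hv0, by simpa using h⟩
  obtain ⟨t, ht, hts⟩ := exists_nonneg_add_smul_mem_sphere hv0 hx.1
  have hvadd : x + t • v = t • v +ᵥ x := by rw [vadd_eq_add, add_comm]
  refine ⟨x + t • v, ⟨hts, ?_⟩, ?_⟩
  · rw [hvadd]; exact AffineSubspace.vadd_mem_of_mem_direction (P.direction.smul_mem t hvP) hx.2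
  · rw [hvadd, l.map_vadd, vadd_eq_add, map_smul, smul_eq_mul]
    nlinarith

end Geometry

/-- The last clause of `RealQConvexOn`, for one boundary `S` and one ball `B`. -/
def AffineMaxPrinciple {E : Type*} [AddCommGroup E] [Module ℝ E] (u : E → EReal) (S B : Set E) :
    Prop :=
  ∀ l : E →ᵃ[ℝ] ℝ, (∀ x ∈ S, u x ≤ l x) → ∀ x ∈ B, u x ≤ l x

theorem AffineMaxPrinciple.erealExt {E : Type*} [AddCommGroup E] [Module ℝ E] {u : E → EReal}
    {S B : Set E} (h : AffineMaxPrinciple u S B)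
    (hSB : ∀ l : E →ᵃ[ℝ] ℝ, ∀ x ∈ B, ∃ y ∈ S, l y ≤ l x) {φ : ℝ → ℝ}
    (hφc : ConvexOn ℝ univ φ) (hφm : StrictMono φ) :
    AffineMaxPrinciple (fun x => _root_.erealExt φ (u x)) S B := by
  intro l hl x hx
  have hbound : ∀ t : ℝ, ∃ a > 0, u x ≤ ((t + (l x - φ t) / a : ℝ) : EReal) := fun t => by
    obtain ⟨a, ha, hsupp⟩ := hφc.exists_supporting_line_of_strictMono hφm t
    let m : E →ᵃ[ℝ] ℝ := a⁻¹ • (l - AffineMap.const ℝ E (φ t)) + AffineMap.const ℝ E t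
    have hm : ∀ y, m y = t + (l y - φ t) / a := fun y => by simp [m]; ring
    refine ⟨a, ha, hm x ▸ h m (fun y hy => ?_) x hx⟩
    exact hm y ▸ le_coe_of_erealExt_le_coe ha hsupp (hl y hy)
  change _root_.erealExt φ (u x) ≤ l x
  induction hux : u x using EReal.rec with
  | bot =>
    obtain ⟨y, hy, hly⟩ := hSB l x hx
    calc _root_.erealExt φ ⊥ ≤ _root_.erealExt φ (u y) := erealExt_bot_le φ _
      _ ≤ l y := hl y hy
      _ ≤ l x := EReal.coe_le_coe_iff.2 hly
  | coe t =>
    obtain ⟨a, ha, hta⟩ := hbound t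
    rw [hux, EReal.coe_le_coe_iff, le_add_iff_nonneg_right, le_div_iff₀ ha, zero_mul,
      sub_nonneg] at hta
    simpa using hta
  | top =>
    obtain ⟨a, -, hta⟩ := hbound 0
    simp [hux] at hta

theorem realQConvexOn_comp_strictConvex_general {n q : ℕ}
    (ω : Set (EuclideanSpace ℝ (Fin n)))
    (u : EuclideanSpace ℝ (Fin n) → EReal) (hu : RealQConvexOn q u ω)
    (φ : ℝ → ℝ) (hφm : StrictMono φ) (hφc : StrictConvexOn ℝ Set.univ φ) :
    RealQConvexOn q (fun x => erealExt φ (u x)) ω := by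
  obtain ⟨hne, husc, hmax⟩ := hu
  have hφcont : Continuous φ := continuousOn_univ.1 (hφc.convexOn.continuousOn isOpen_univ)
  refine ⟨fun x hx => erealExt_ne_top φ (hne x hx), husc.erealExt hne hφcont hφm.monotone, ?_⟩
  intro P hdim c r hr hsub
  have hP : P.direction ≠ ⊥ := fun h => by rw [h, finrank_bot] at hdim; omega
  exact AffineMaxPrinciple.erealExt (hmax P hdim c r hr hsub)
    (fun l x hx => P.exists_mem_sphere_inter_le hP l hx) hφc.convexOn hφm

/-- If `u` is real q-convex on `ω` and `φ : ℝ → ℝ` is strictly increasing and strictly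
convex (extended to `−∞` by its limit), then `φ ∘ u` is real q-convex on `ω`. -/
theorem realQConvexOn_comp_strictConvex {n q : ℕ}
    (ω : Set (EuclideanSpace ℝ (Fin n))) (hω : IsOpen ω)
    (u : EuclideanSpace ℝ (Fin n) → EReal) (hu : RealQConvexOn q u ω)
    (φ : ℝ → ℝ) (hφm : StrictMono φ) (hφc : StrictConvexOn ℝ Set.univ φ) :
    RealQConvexOn q (fun x => erealExt φ (u x)) ω :=
  realQConvexOn_comp_strictConvex_general ω u hu φ hφm hφc
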